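/- For all integers ℓ, j ≥ 1 and p, the double sum ∑_{p=0}^{P} ∑_{r=0}^{p} (-1)^r C(p,r) s(ℓr, ℓr - j) is independent of P once P ≥ 2j+1, i.e., the p-th finite-difference term ∑_{r=0}^{p} (-1)^r C(p,r) s(ℓr, ℓr-j) vanishes for all p > 2j. -/

import Mathlib

/-!
The recursion `s(n+1, k+1) = s(n, k) + n s(n, k+1)` says that the forward difference of
`n ↦ s(n, n-(j+1))` is `n ↦ n s(n, n-j)`. Vanishing of `Δ^d` (the discrete form of "polynomial of
degree `< d`") goes from `d` to `d+1` under multiplication by `n` and under antidifferences, and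
survives the substitution `n ↦ ℓn`. Hence `Δ^(2j+1)` kills `r ↦ s(ℓr, ℓr-j)`, while the `p`-th
alternating binomial sum is `(-1)^p Δ^p` of this function at `0`.
-/

/-- Unsigned Stirling numbers of the first kind. -/
def stirling1 : ℕ → ℕ → ℕ
  | 0, 0 => 1
  | 0, _+1 => 0
  | _+1, 0 => 0
  | n+1, k+1 => stirling1 n k + n * stirling1 n (k+1)

/-- `s(n, n-j)` with the convention that it is `0` when `n - j < 0`. -/
def stirling1Shift (n j : ℕ) : ℤ :=
  if j ≤ n then (stirling1 n (n - j) : ℤ) else 0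

open Finset fwdDiff Function

section FwdDiff

variable {G : Type*} [AddCommGroup G] {f : ℕ → G} {d : ℕ}

theorem fwdDiff_iter_eq_zero_of_le (hf : Δ_[1] ^[d] f = 0) {p : ℕ} (hp : d ≤ p) :
    Δ_[1] ^[p] f = 0 := by
  obtain ⟨k, rfl⟩ := Nat.exists_eq_add_of_le' hp
  rw [iterate_add_apply, hf]
  exact iterate_fixed (fwdDiff_const 1 0) k

theorem fwdDiff_iter_succ_id_nsmul_eq_zero (hf : Δ_[1] ^[d] f = 0) :
    Δ_[1] ^[d + 1] (fun n ↦ n • f n) = 0 := by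
  induction d generalizing f with
  | zero =>
    subst hf
    ext
    simp
  | succ d ih =>
    have product_rule :
        Δ_[1] (fun n ↦ n • f n) = (fun n ↦ n • Δ_[1] f n) + fun n ↦ f (n + 1) := by
      ext n
      simp only [fwdDiff, Pi.add_apply, add_nsmul, one_nsmul, smul_sub]
      abel
    rw [iterate_succ_apply, product_rule, fwdDiff_iter_add, ih (f := Δ_[1] f) hf, zero_add]
    ext n
    rw [fwdDiff_iter_comp_add, hf]
    rfl

theorem fwdDiff_iter_comp_mul_eq_zero (hf : Δ_[1] ^[d] f = 0) (ℓ : ℕ) :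
    Δ_[1] ^[d] (fun n ↦ f (ℓ * n)) = 0 := by
  induction d generalizing f with
  | zero => exact congrArg (· ∘ (ℓ * ·)) hf
  | succ d ih =>
    have telescope : Δ_[1] (fun n ↦ f (ℓ * n)) =
        fun n ↦ (∑ i ∈ range ℓ, fun m ↦ Δ_[1] f (m + i)) (ℓ * n) := by
      ext n
      simp only [fwdDiff, Finset.sum_apply, mul_add, mul_one]
      exact (sum_range_sub (fun i ↦ f (ℓ * n + i)) ℓ).symm
    rw [iterate_succ_apply, telescope]
    refine ih ?_
    rw [fwdDiff_iter_finsetSum]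
    refine sum_eq_zero fun i _ ↦ funext fun m ↦ ?_
    rw [fwdDiff_iter_comp_add]
    exact congrFun hf (m + i)

end FwdDiff

theorem sum_neg_one_pow_mul_choose_mul_eq_fwdDiff_iter {R : Type*} [CommRing R] (f : ℕ → R)
    (p : ℕ) :
    ∑ r ∈ range (p + 1), (-1 : R) ^ r * p.choose r * f r = (-1) ^ p * Δ_[1] ^[p] f 0 := by
  rw [fwdDiff_iter_eq_sum_shift, mul_sum]
  refine sum_congr rfl fun r hr ↦ ?_
  obtain ⟨m, rfl⟩ := Nat.exists_eq_add_of_le (Nat.lt_succ_iff.mp (mem_range.mp hr))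
  rw [Nat.add_sub_cancel_left, zsmul_eq_mul, zero_add, smul_eq_mul, mul_one]
  push_cast
  have : ((-1 : R) ^ m) ^ 2 = 1 := by rw [pow_right_comm, neg_one_sq, one_pow]
  linear_combination -(-1 : R) ^ r * (r + m).choose r * f r * this

theorem stirling1_eq_stirlingFirst : stirling1 = Nat.stirlingFirst := by
  funext n k
  induction n generalizing k with
  | zero => cases k <;> rfl
  | succ n ih =>
    cases k with
    | zero => rfl
    | succ k => rw [stirling1, Nat.stirlingFirst_succ_succ, ih, ih, add_comm]

theorem stirling1Shift_zero_right (n : ℕ) : stirling1Shift n 0 = 1 := by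
  simp [stirling1Shift, stirling1_eq_stirlingFirst, Nat.stirlingFirst_self]

theorem stirling1Shift_succ_succ (n j : ℕ) :
    stirling1Shift (n + 1) (j + 1) = stirling1Shift n (j + 1) + n * stirling1Shift n j := by
  rcases lt_trichotomy j n with hjn | rfl | hnj
  · obtain ⟨m, rfl⟩ := Nat.exists_eq_add_of_lt hjn
    simp only [stirling1Shift, stirling1_eq_stirlingFirst,
      if_pos (by omega : j + 1 ≤ j + m + 1 + 1), if_pos (by omega : j + 1 ≤ j + m + 1),
      if_pos (by omega : j ≤ j + m + 1), show j + m + 1 + 1 - (j + 1) = m + 1 by omega,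
      show j + m + 1 - (j + 1) = m by omega, show j + m + 1 - j = m + 1 by omega,
      Nat.stirlingFirst_succ_succ]
    push_cast
    ring
  · cases j <;> simp [stirling1Shift, stirling1_eq_stirlingFirst]
  · simp [stirling1Shift, show ¬ j + 1 ≤ n by omega, show ¬ j ≤ n by omega]

theorem fwdDiff_stirling1Shift (j : ℕ) :
    Δ_[1] (stirling1Shift · (j + 1)) = fun n ↦ n • stirling1Shift n j := by
  ext n
  simp [fwdDiff, stirling1Shift_succ_succ]

theorem fwdDiff_iter_stirling1Shift_eq_zero (j : ℕ) :
    Δ_[1] ^[2 * j + 1] (stirling1Shift · j) = 0 := by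
  induction j with
  | zero =>
    ext n
    simp [fwdDiff, stirling1Shift_zero_right]
  | succ j ih =>
    rw [show 2 * (j + 1) + 1 = 2 * j + 1 + 1 + 1 by ring, iterate_succ_apply,
      fwdDiff_stirling1Shift]
    exact fwdDiff_iter_succ_id_nsmul_eq_zero ih

theorem altBinomSum_stirling1_stable_general (ℓ j : ℕ) :
    (∀ p : ℕ, 2 * j < p →
        ∑ r ∈ Finset.range (p + 1),
          (-1 : ℤ) ^ r * (p.choose r) * stirling1Shift (ℓ * r) j = 0) ∧
      ∀ P₁ P₂ : ℕ, 2 * j + 1 ≤ P₁ → 2 * j + 1 ≤ P₂ →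
        (∑ p ∈ Finset.range (P₁ + 1), ∑ r ∈ Finset.range (p + 1),
            (-1 : ℤ) ^ r * (p.choose r) * stirling1Shift (ℓ * r) j) =
          ∑ p ∈ Finset.range (P₂ + 1), ∑ r ∈ Finset.range (p + 1),
            (-1 : ℤ) ^ r * (p.choose r) * stirling1Shift (ℓ * r) j := by
  have vanish : ∀ p : ℕ, 2 * j < p →
      ∑ r ∈ range (p + 1), (-1 : ℤ) ^ r * (p.choose r) * stirling1Shift (ℓ * r) j = 0 := by
    intro p hp
    have hΔ := fwdDiff_iter_comp_mul_eq_zero (fwdDiff_iter_stirling1Shift_eq_zero j) ℓ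
    rw [sum_neg_one_pow_mul_choose_mul_eq_fwdDiff_iter (fun r ↦ stirling1Shift (ℓ * r) j),
      fwdDiff_iter_eq_zero_of_le hΔ hp, Pi.zero_apply, mul_zero]
  refine ⟨vanish, fun P₁ P₂ h₁ h₂ ↦ ?_⟩
  rw [eventually_constant_sum vanish (by omega : 2 * j + 1 ≤ P₁ + 1),
    eventually_constant_sum vanish (by omega : 2 * j + 1 ≤ P₂ + 1)]

/-- For `ℓ, j ≥ 1`, the inner finite-difference term
`∑_{r=0}^p (-1)^r C(p,r) s(ℓr, ℓr-j)` vanishes for all `p > 2j`; consequently the partial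
double sums `∑_{p=0}^P ∑_{r=0}^p (-1)^r C(p,r) s(ℓr, ℓr-j)` are independent of `P` once
`P ≥ 2j+1`. -/
theorem altBinomSum_stirling1_stable (ℓ j : ℕ) (hℓ : 1 ≤ ℓ) (hj : 1 ≤ j) :
    (∀ p : ℕ, 2 * j < p →
        ∑ r ∈ Finset.range (p + 1),
          (-1 : ℤ) ^ r * (p.choose r) * stirling1Shift (ℓ * r) j = 0) ∧
      ∀ P₁ P₂ : ℕ, 2 * j + 1 ≤ P₁ → 2 * j + 1 ≤ P₂ →
        (∑ p ∈ Finset.range (P₁ + 1), ∑ r ∈ Finset.range (p + 1),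
            (-1 : ℤ) ^ r * (p.choose r) * stirling1Shift (ℓ * r) j) =
          ∑ p ∈ Finset.range (P₂ + 1), ∑ r ∈ Finset.range (p + 1),
            (-1 : ℤ) ^ r * (p.choose r) * stirling1Shift (ℓ * r) j :=
  altBinomSum_stirling1_stable_general ℓ j
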